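/- Let f : ℤ → ℚ/ℤ be the map sending t to the class of 4*t^2 / (40*n + 15) for a fixed natural number n. Then the class of 2/(40*n+15) and the class of -2/(40*n+15) are not in the image of f. -/
import Mathlib

lemma aux_mod5 (c t k m : ℤ) (hc : c = 2 ∨ c = -2)
    (h : 4 * t ^ 2 - c = k * (40 * m + 15)) : False := by
  have h5 : ((4 * t ^ 2 - c : ℤ) : ZMod 5) = ((k * (40 * m + 15) : ℤ) : ZMod 5) := by
    exact_mod_cast congrArg _ h
  push_cast at h5
  have h40 : (40 : ZMod 5) = 0 := by decide
  have h15 : (15 : ZMod 5) = 0 := by decide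
  rw [h40, h15] at h5
  simp at h5
  have key : ∀ a : ZMod 5, 4 * a ^ 2 ≠ 2 ∧ 4 * a ^ 2 ≠ -2 := by decide
  rcases hc with rfl | rfl
  · exact (key (t : ZMod 5)).1 (by push_cast at h5 ⊢; linear_combination h5)
  · exact (key (t : ZMod 5)).2 (by push_cast at h5 ⊢; linear_combination h5)

lemma aux_main (n : ℕ) (c : ℤ) (hc : c = 2 ∨ c = -2)
    (h : (((c : ℚ) / (40 * (n : ℚ) + 15) : ℚ) : AddCircle (1 : ℚ)) ∈
      Set.range (fun t : ℤ => (((4 * (t : ℚ) ^ 2 / (40 * (n : ℚ) + 15)) : ℚ) : AddCircle (1 : ℚ)))) :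
    False := by
  obtain ⟨t, ht⟩ := h
  have hd : (40 * (n : ℚ) + 15) ≠ 0 := by positivity
  have hmem := QuotientAddGroup.eq_iff_sub_mem.mp ht
  rw [AddSubgroup.mem_zmultiples_iff] at hmem
  obtain ⟨k, hk⟩ := hmem
  simp only [zsmul_eq_mul, mul_one] at hk
  have hq : 4 * (t : ℚ) ^ 2 - (c : ℚ) = (k : ℚ) * (40 * (n : ℚ) + 15) := by
    field_simp at hk
    linarith [hk]
  have hz : 4 * t ^ 2 - c = k * (40 * (n : ℤ) + 15) := by exact_mod_cast hq
  exact aux_mod5 c t k n hc hz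

theorem pm_two_not_in_image_self_linking (n : ℕ) :
    (((2 : ℚ) / (40 * (n : ℚ) + 15) : ℚ) : AddCircle (1 : ℚ)) ∉
      Set.range (fun t : ℤ => (((4 * (t : ℚ) ^ 2 / (40 * (n : ℚ) + 15)) : ℚ) : AddCircle (1 : ℚ))) ∧
    (((-2 : ℚ) / (40 * (n : ℚ) + 15) : ℚ) : AddCircle (1 : ℚ)) ∉
      Set.range (fun t : ℤ => (((4 * (t : ℚ) ^ 2 / (40 * (n : ℚ) + 15)) : ℚ) : AddCircle (1 : ℚ))) := by
  constructor
  · intro h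
    exact aux_main n 2 (Or.inl rfl) (by push_cast; exact h)
  · intro h
    exact aux_main n (-2) (Or.inr rfl) (by push_cast; exact h)
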